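/- For every real x > −2, ln Γ(x + 2) = ∫₀^∞ [ x + 1 − (1 − e^{−(x+1) t})/(1 − e^{−t}) ] · (e^{−t}/t) dt, where Γ is the Gamma function. -/

import Mathlib

open Real MeasureTheory Set Filter

/-- the Malmsten integrand, as a function of the parameter `a` and variable `t`. -/
noncomputable def malG (a t : ℝ) : ℝ :=
  (a - (1 - Real.exp (-a * t)) / (1 - Real.exp (-t))) * (Real.exp (-t) / t)

lemma one_sub_exp_pos {t : ℝ} (ht : 0 < t) : 0 < 1 - Real.exp (-t) := by
  have : Real.exp (-t) < 1 := Real.exp_lt_one_iff.mpr (by linarith)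
  linarith

lemma one_sub_exp_le (u : ℝ) : 1 - Real.exp (-u) ≤ u := by
  have := Real.add_one_le_exp (-u); linarith

lemma mul_exp_le_one_sub_exp {t : ℝ} (ht : 0 ≤ t) : t * Real.exp (-t) ≤ 1 - Real.exp (-t) := by
  have h := Real.add_one_le_exp t
  have h2 : (t + 1) * Real.exp (-t) ≤ Real.exp t * Real.exp (-t) := by
    apply mul_le_mul_of_nonneg_right h (Real.exp_nonneg _)
  rw [← Real.exp_add] at h2
  simp at h2
  nlinarith [Real.exp_nonneg (-t)]

/-- The Frullani integrand bound. -/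
lemma frullani_bound {y t : ℝ} (hy : 0 < y) (ht : 0 < t) :
    |(Real.exp (-t) - Real.exp (-(y * t))) / t| ≤ |y - 1| * Real.exp (-(min 1 y) * t) := by
  rcases le_total 1 y with h | h
  · have hmin : min 1 y = 1 := min_eq_left h
    rw [hmin]
    have key : Real.exp (-(y * t)) ≤ Real.exp (-t) := by
      apply Real.exp_le_exp.mpr; nlinarith
    have h1 : Real.exp (-t) - Real.exp (-(y * t)) = Real.exp (-t) * (1 - Real.exp (-((y-1) * t))) := by
      rw [mul_sub, mul_one, ← Real.exp_add]; ring_nf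
    have h2 : 1 - Real.exp (-((y-1)*t)) ≤ (y-1)*t := one_sub_exp_le _
    have h3 : 0 ≤ 1 - Real.exp (-((y-1)*t)) := by
      have : Real.exp (-((y-1)*t)) ≤ 1 := Real.exp_le_one_iff.mpr (by nlinarith)
      linarith
    rw [abs_div, abs_of_pos ht, abs_of_nonneg (by linarith), abs_of_nonneg (by linarith)]
    rw [div_le_iff₀ ht, h1]
    calc Real.exp (-t) * (1 - Real.exp (-((y-1)*t))) ≤ Real.exp (-t) * ((y-1)*t) := by
          apply mul_le_mul_of_nonneg_left h2 (Real.exp_nonneg _)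
      _ = (y-1) * Real.exp (-1 * t) * t := by ring_nf
  · have hmin : min 1 y = y := min_eq_right h
    rw [hmin]
    have key : Real.exp (-t) ≤ Real.exp (-(y * t)) := by
      apply Real.exp_le_exp.mpr; nlinarith
    have h1 : Real.exp (-(y*t)) - Real.exp (-t) = Real.exp (-(y*t)) * (1 - Real.exp (-((1-y) * t))) := by
      rw [mul_sub, mul_one, ← Real.exp_add]; ring_nf
    have h2 : 1 - Real.exp (-((1-y)*t)) ≤ (1-y)*t := one_sub_exp_le _
    have h3 : 0 ≤ 1 - Real.exp (-((1-y)*t)) := by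
      have : Real.exp (-((1-y)*t)) ≤ 1 := Real.exp_le_one_iff.mpr (by nlinarith)
      linarith
    rw [abs_div, abs_of_pos ht, abs_of_nonpos (by linarith), abs_of_nonpos (by linarith)]
    rw [neg_sub, neg_sub, div_le_iff₀ ht, h1]
    calc Real.exp (-(y*t)) * (1 - Real.exp (-((1-y)*t))) ≤ Real.exp (-(y*t)) * ((1-y)*t) := by
          apply mul_le_mul_of_nonneg_left h2 (Real.exp_nonneg _)
      _ = (1-y) * Real.exp (-y * t) * t := by ring_nf

lemma frullani_integrable {y : ℝ} (hy : 0 < y) :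
    IntegrableOn (fun t => (Real.exp (-t) - Real.exp (-(y * t))) / t) (Ioi 0) := by
  have hmin : 0 < min 1 y := lt_min one_pos hy
  apply Integrable.mono' (((exp_neg_integrableOn_Ioi 0 hmin)).const_mul |y - 1|)
  · apply ContinuousOn.aestronglyMeasurable _ measurableSet_Ioi
    apply ContinuousOn.div
    · exact (Continuous.sub (Real.continuous_exp.comp continuous_neg)
        (Real.continuous_exp.comp (continuous_neg.comp (continuous_const.mul continuous_id)))).continuousOn
    · exact continuousOn_id
    · intro t ht; exact ne_of_gt ht
  · filter_upwards [self_mem_ae_restrict measurableSet_Ioi] with t ht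
    exact frullani_bound hy ht

lemma integral_exp_neg_mul {y : ℝ} (hy : 0 < y) :
    ∫ t in Ioi (0:ℝ), Real.exp (-(y * t)) = 1 / y := by
  have := integral_comp_mul_left_Ioi (fun x => Real.exp (-x)) 0 hy
  simp only [mul_zero] at this
  rw [show (fun t => Real.exp (-(y * t))) = (fun t => (fun x => Real.exp (-x)) (y * t)) from rfl,
    this, integral_exp_neg_Ioi_zero]
  simp [one_div]

lemma frullani_hasDerivAt {y : ℝ} (hy : 0 < y) :
    HasDerivAt (fun y => ∫ t in Ioi (0:ℝ), (Real.exp (-t) - Real.exp (-(y * t))) / t)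
      (1 / y) y := by
  have hmin : 0 < min 1 (y/2) := lt_min one_pos (by linarith)
  have key := hasDerivAt_integral_of_dominated_loc_of_deriv_le (μ := volume.restrict (Ioi 0))
    (F := fun y t => (Real.exp (-t) - Real.exp (-(y * t))) / t)
    (F' := fun y t => Real.exp (-(y * t)))
    (x₀ := y) (bound := fun t => Real.exp (-(y/2) * t))
    (s := Metric.ball y (y/2)) (Metric.ball_mem_nhds y (by linarith))
    ?_ (frullani_integrable hy) ?_ ?_ ((exp_neg_integrableOn_Ioi 0 (by linarith : (0:ℝ) < y/2))) ?_
  · have := key.2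
    rwa [integral_exp_neg_mul hy] at this
  · filter_upwards [eventually_gt_nhds (by linarith : (0:ℝ) < y)] with z hz
    exact (frullani_integrable hz).aestronglyMeasurable
  · apply ContinuousOn.aestronglyMeasurable _ measurableSet_Ioi
    exact (Real.continuous_exp.comp (continuous_const.mul continuous_id).neg).continuousOn
  · filter_upwards [self_mem_ae_restrict measurableSet_Ioi] with t ht z hz
    rw [Real.norm_eq_abs, abs_of_nonneg (Real.exp_nonneg _)]
    apply Real.exp_le_exp.mpr
    rw [Metric.mem_ball, Real.dist_eq, abs_lt] at hz
    nlinarith [mem_Ioi.mp ht]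
  · filter_upwards [self_mem_ae_restrict measurableSet_Ioi] with t ht z hz
    have ht0 : (0:ℝ) < t := ht
    have h1 : HasDerivAt (fun z : ℝ => -(z * t)) (-t) z := by
      have := ((hasDerivAt_id' z).mul_const t).neg
      rwa [one_mul] at this
    have h2 : HasDerivAt (fun z : ℝ => Real.exp (-(z * t))) (Real.exp (-(z*t)) * (-t)) z :=
      (Real.hasDerivAt_exp _).comp z h1
    have h3 : HasDerivAt (fun z : ℝ => (Real.exp (-t) - Real.exp (-(z * t))) / t)
        ((0 - Real.exp (-(z*t)) * (-t)) / t) z :=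
      ((hasDerivAt_const z (Real.exp (-t))).sub h2).div_const t
    refine h3.congr_deriv ?_
    show (0 - Real.exp (-(z*t)) * (-t)) / t = Real.exp (-(z*t))
    rw [div_eq_iff ht0.ne']
    ring

lemma frullani {y : ℝ} (hy : 0 < y) :
    ∫ t in Ioi (0:ℝ), (Real.exp (-t) - Real.exp (-(y * t))) / t = Real.log y := by
  set Φ : ℝ → ℝ := fun y => ∫ t in Ioi (0:ℝ), (Real.exp (-t) - Real.exp (-(y * t))) / t with hΦ
  have hzero : ∀ z ∈ Ioi (0:ℝ), HasDerivAt (fun w => Φ w - Real.log w) 0 z := by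
    intro z hz
    have := (frullani_hasDerivAt (mem_Ioi.mp hz)).sub (Real.hasDerivAt_log (ne_of_gt hz))
    rw [show (1:ℝ)/z - z⁻¹ = 0 by simp] at this
    exact this
  have hconst : Φ y - Real.log y = Φ 1 - Real.log 1 := by
    apply (convex_Ioi (0:ℝ)).is_const_of_fderivWithin_eq_zero (𝕜 := ℝ)
      (f := fun w => Φ w - Real.log w)
    · intro z hz
      exact (hzero z hz).differentiableAt.differentiableWithinAt
    · intro z hz
      rw [fderivWithin_of_isOpen isOpen_Ioi hz]
      have h0 : HasDerivAt (fun w => Φ w - Real.log w) 0 z := hzero z hz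
      rw [h0.hasFDerivAt.fderiv]
      ext v
      simp
    · exact mem_Ioi.mpr hy
    · exact mem_Ioi.mpr one_pos
  have hΦ1 : Φ 1 = 0 := by
    rw [hΦ]; simp
  rw [Real.log_one, hΦ1] at hconst
  linarith

lemma malG_contOn (a : ℝ) : ContinuousOn (malG a) (Ioi 0) := by
  unfold malG
  apply ContinuousOn.mul
  · apply ContinuousOn.sub continuousOn_const
    exact ContinuousOn.div (by fun_prop) (by fun_prop)
      (fun t ht => ne_of_gt (one_sub_exp_pos ht))
  · exact ContinuousOn.div (by fun_prop) continuousOn_id (fun t ht => ne_of_gt ht)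

lemma malG_bound_small {a t : ℝ} (ht : 0 < t) (ht1 : t ≤ 1) (hta : |a| * t ≤ 1) :
    |malG a t| ≤ |a| + a ^ 2 := by
  have hE := one_sub_exp_pos ht
  have hEpos := Real.exp_pos (-t)
  have hteE : t * Real.exp (-t) ≤ 1 - Real.exp (-t) := mul_exp_le_one_sub_exp ht.le
  have hrw : malG a t =
      (a * (1 - Real.exp (-t)) - (1 - Real.exp (-a * t))) / (1 - Real.exp (-t))
        * (Real.exp (-t) / t) := by
    unfold malG
    congr 1
    field_simp
  have hN1 : |Real.exp (-t) - 1 - (-t)| ≤ (-t) ^ 2 :=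
    Real.abs_exp_sub_one_sub_id_le (by rwa [abs_neg, abs_of_pos ht])
  have hN2 : |Real.exp (-a * t) - 1 - (-a * t)| ≤ (-a * t) ^ 2 :=
    Real.abs_exp_sub_one_sub_id_le
      (by rw [abs_mul, abs_neg, abs_of_pos ht]; exact hta)
  have hN : |a * (1 - Real.exp (-t)) - (1 - Real.exp (-a * t))| ≤ (|a| + a ^ 2) * t ^ 2 := by
    have key : a * (1 - Real.exp (-t)) - (1 - Real.exp (-a * t)) =
        -(a * (Real.exp (-t) - 1 - (-t))) + (Real.exp (-a * t) - 1 - (-a * t)) := by ring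
    rw [key]
    calc |(-(a * (Real.exp (-t) - 1 - (-t))) + (Real.exp (-a * t) - 1 - (-a * t)))|
        ≤ |a| * |Real.exp (-t) - 1 - (-t)| + |Real.exp (-a * t) - 1 - (-a * t)| := by
          refine (abs_add_le _ _).trans ?_
          rw [abs_neg, abs_mul]
      _ ≤ |a| * (-t) ^ 2 + (-a * t) ^ 2 := by gcongr
      _ = (|a| + a ^ 2) * t ^ 2 := by ring
  rw [hrw, abs_mul, abs_div, abs_of_pos hE, abs_of_pos (div_pos hEpos ht),
    div_mul_div_comm, div_le_iff₀ (by positivity)]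
  nlinarith [mul_le_mul_of_nonneg_right hN hEpos.le,
    mul_le_mul_of_nonneg_left hteE (by positivity : (0:ℝ) ≤ (|a| + a ^ 2) * t)]

lemma malG_integrableOn_tail {a δ : ℝ} (ha : -1 < a) (hδ : 0 < δ) :
    IntegrableOn (malG a) (Ioi δ) := by
  have hc : 0 < 1 - Real.exp (-δ) := one_sub_exp_pos hδ
  set c := 1 - Real.exp (-δ) with hcdef
  have hbInt : Integrable (fun t => (|a| / δ) * Real.exp (-(1:ℝ) * t)
      + (1 / (δ * c)) * Real.exp (-(1:ℝ) * t)
      + (1 / (δ * c)) * Real.exp (-(1 + a) * t)) (volume.restrict (Ioi δ)) := by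
    exact (((exp_neg_integrableOn_Ioi δ one_pos).const_mul _).add
      ((exp_neg_integrableOn_Ioi δ one_pos).const_mul _)).add
      ((exp_neg_integrableOn_Ioi δ (by linarith)).const_mul _)
  apply Integrable.mono' hbInt
  · exact ((malG_contOn a).mono (Ioi_subset_Ioi hδ.le)).aestronglyMeasurable measurableSet_Ioi
  · filter_upwards [self_mem_ae_restrict measurableSet_Ioi] with t ht
    have htδ : δ < t := ht
    have ht0 : 0 < t := lt_trans hδ htδ
    have hE := one_sub_exp_pos ht0
    have hcE : c ≤ 1 - Real.exp (-t) := by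
      have : Real.exp (-t) ≤ Real.exp (-δ) := Real.exp_le_exp.mpr (by linarith)
      rw [hcdef]; linarith
    have habs : |malG a t| ≤ (|a| + (1 + Real.exp (-a * t)) / c) * (Real.exp (-t) / t) := by
      unfold malG
      rw [abs_mul, abs_of_pos (div_pos (Real.exp_pos _) ht0)]
      apply mul_le_mul_of_nonneg_right _ (le_of_lt (div_pos (Real.exp_pos _) ht0))
      refine (abs_sub _ _).trans ?_
      gcongr
      rw [abs_div, abs_of_pos hE]
      refine div_le_div₀ (by positivity) ?_ hc hcE
      refine (abs_sub _ _).trans ?_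
      rw [abs_one, abs_of_pos (Real.exp_pos _)]
    refine habs.trans ?_
    have h1 : Real.exp (-t) / t ≤ Real.exp (-t) / δ := by gcongr
    calc (|a| + (1 + Real.exp (-a * t)) / c) * (Real.exp (-t) / t)
        ≤ (|a| + (1 + Real.exp (-a * t)) / c) * (Real.exp (-t) / δ) := by
          apply mul_le_mul_of_nonneg_left h1
          positivity
      _ = (|a| / δ) * Real.exp (-(1:ℝ) * t) + (1 / (δ * c)) * Real.exp (-(1:ℝ) * t)
          + (1 / (δ * c)) * (Real.exp (-a * t) * Real.exp (-t)) := by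
          field_simp
          ring
      _ = (|a| / δ) * Real.exp (-(1:ℝ) * t) + (1 / (δ * c)) * Real.exp (-(1:ℝ) * t)
          + (1 / (δ * c)) * Real.exp (-(1 + a) * t) := by
          rw [← Real.exp_add]; ring_nf

lemma malG_integrableOn {a : ℝ} (ha : -1 < a) : IntegrableOn (malG a) (Ioi 0) := by
  set δ : ℝ := min 1 (1 / (|a| + 1)) with hδdef
  have hδ : 0 < δ := lt_min one_pos (by positivity)
  have h1 : IntegrableOn (malG a) (Ioc 0 δ) := by
    have hm : AEStronglyMeasurable (malG a) volume := by
      apply Measurable.aestronglyMeasurable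
      unfold malG
      fun_prop
    apply Measure.integrableOn_of_bounded (M := |a| + a ^ 2) measure_Ioc_lt_top.ne hm
    filter_upwards [self_mem_ae_restrict measurableSet_Ioc] with t ht
    rw [Real.norm_eq_abs]
    apply malG_bound_small ht.1 (ht.2.trans (min_le_left _ _))
    calc |a| * t ≤ |a| * (1 / (|a| + 1)) := by
          apply mul_le_mul_of_nonneg_left (ht.2.trans (min_le_right _ _)) (abs_nonneg a)
      _ ≤ 1 := by
          rw [mul_one_div, div_le_one (by positivity)]
          linarith [abs_nonneg a]
  have h2 := malG_integrableOn_tail ha hδ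
  have := h1.union h2
  rwa [Ioc_union_Ioi_eq_Ioi hδ.le] at this

lemma convexOn_affine (c d : ℝ) : ConvexOn ℝ univ (fun y : ℝ => c * y + d) := by
  refine ⟨convex_univ, fun p _ q _ s r hs hr hsr => le_of_eq ?_⟩
  simp only [smul_eq_mul]
  linear_combination (-d) * hsr

lemma convexOn_const_mul_exp_affine {k : ℝ} (hk : 0 ≤ k) (c d : ℝ) :
    ConvexOn ℝ univ (fun y : ℝ => k * Real.exp (c * y + d)) := by
  refine ⟨convex_univ, fun p _ q _ s r hs hr hsr => ?_⟩
  have key := convexOn_exp.2 (mem_univ (c * p + d)) (mem_univ (c * q + d)) hs hr hsr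
  simp only [smul_eq_mul] at key ⊢
  have harg : c * (s * p + r * q) + d = s * (c * p + d) + r * (c * q + d) := by
    linear_combination (-d) * hsr
  rw [harg]
  nlinarith [Real.exp_pos (c * p + d), Real.exp_pos (c * q + d)]

lemma malG_convexOn {t : ℝ} (ht : 0 < t) :
    ConvexOn ℝ univ (fun y : ℝ => malG (y - 1) t) := by
  have hE := one_sub_exp_pos ht
  set c1 : ℝ := Real.exp (-t) / t with hc1
  set c2 : ℝ := Real.exp (-t) / (t * (1 - Real.exp (-t))) with hc2
  have hc2nn : 0 ≤ c2 := by positivity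
  have hrw : (fun y : ℝ => malG (y - 1) t) =
      fun y : ℝ => (c1 * y + (-c1 - c2)) + c2 * Real.exp ((-t) * y + t) := by
    funext y
    unfold malG
    rw [hc1, hc2, show (-t) * y + t = -(y - 1) * t by ring]
    field_simp
    ring
  rw [hrw]
  exact (convexOn_affine c1 (-c1 - c2)).add (convexOn_const_mul_exp_affine hc2nn (-t) t)

lemma malF_convexOn : ConvexOn ℝ (Ioi 0) (fun y : ℝ => ∫ t in Ioi (0:ℝ), malG (y - 1) t) := by
  refine ⟨convex_Ioi 0, fun p hp q hq s r hs hr hsr => ?_⟩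
  have hm : s • p + r • q ∈ Ioi (0:ℝ) := (convex_Ioi 0) hp hq hs hr hsr
  have hip : IntegrableOn (malG (p - 1)) (Ioi 0) :=
    malG_integrableOn (by have := mem_Ioi.mp hp; linarith)
  have hiq : IntegrableOn (malG (q - 1)) (Ioi 0) :=
    malG_integrableOn (by have := mem_Ioi.mp hq; linarith)
  have him : IntegrableOn (malG ((s • p + r • q) - 1)) (Ioi 0) :=
    malG_integrableOn (by have := mem_Ioi.mp hm; linarith)
  calc ∫ t in Ioi (0:ℝ), malG ((s • p + r • q) - 1) t
      ≤ ∫ t in Ioi (0:ℝ), (s * malG (p - 1) t + r * malG (q - 1) t) := by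
        have hadd : IntegrableOn (fun t => s * malG (p - 1) t + r * malG (q - 1) t) (Ioi 0) :=
          (hip.const_mul s).add (hiq.const_mul r)
        apply setIntegral_mono_on him hadd measurableSet_Ioi
        intro t ht
        have := (malG_convexOn (mem_Ioi.mp ht)).2 (mem_univ p) (mem_univ q) hs hr hsr
        simpa [smul_eq_mul] using this
    _ = s • (∫ t in Ioi (0:ℝ), malG (p - 1) t) + r • (∫ t in Ioi (0:ℝ), malG (q - 1) t) := by
        rw [integral_add (hip.const_mul s) (hiq.const_mul r)]
        simp [smul_eq_mul, MeasureTheory.integral_const_mul]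

lemma malF_feq {a : ℝ} (ha : -1 < a) :
    ∫ t in Ioi (0:ℝ), malG (a + 1) t
      = (∫ t in Ioi (0:ℝ), malG a t) + Real.log (a + 1) := by
  have hpt : ∀ t ∈ Ioi (0:ℝ), malG (a + 1) t
      = malG a t + (Real.exp (-t) - Real.exp (-((a + 1) * t))) / t := by
    intro t ht
    have ht0 : (0:ℝ) < t := ht
    have hE := one_sub_exp_pos ht0
    unfold malG
    rw [show -(a + 1) * t = -(a * t) + -t by ring, show -((a + 1) * t) = -(a * t) + -t by ring,
      Real.exp_add, show -a * t = -(a * t) by ring]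
    field_simp
    ring
  rw [setIntegral_congr_fun measurableSet_Ioi hpt,
    integral_add (malG_integrableOn ha) (frullani_integrable (by linarith : (0:ℝ) < a + 1)),
    frullani (by linarith : (0:ℝ) < a + 1)]

lemma log_Gamma_eq_malF {y : ℝ} (hy : 0 < y) :
    Real.log (Real.Gamma y) = ∫ t in Ioi (0:ℝ), malG (y - 1) t := by
  set f : ℝ → ℝ := fun w => ∫ t in Ioi (0:ℝ), malG (w - 1) t with hf
  have hfeq : ∀ {z : ℝ}, 0 < z → f (z + 1) = f z + Real.log z := by
    intro z hz
    have h1 : f (z + 1) = ∫ t in Ioi (0:ℝ), malG ((z - 1) + 1) t := by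
      rw [hf]; norm_num
    rw [h1, malF_feq (by linarith : -1 < z - 1), show z - 1 + 1 = z by ring]
  have hf1 : f 1 = 0 := by
    show (∫ t in Ioi (0:ℝ), malG ((1:ℝ) - 1) t) = 0
    have h0 : ∀ t ∈ Ioi (0:ℝ), malG ((1:ℝ) - 1) t = 0 := by
      intro t _
      unfold malG
      norm_num
    rw [setIntegral_congr_fun measurableSet_Ioi h0]
    simp
  have h1 := Real.BohrMollerup.tendsto_logGammaSeq malF_convexOn hfeq hy
  have h2 := Real.BohrMollerup.tendsto_log_gamma hy
  have h3 := tendsto_nhds_unique h2 h1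
  have h4 : f y - f 1 = f y := by rw [hf1, sub_zero]
  exact h3.trans h4

theorem malmsten_formula_two (x : ℝ) (hx : -2 < x) :
    Real.log (Real.Gamma (x + 2)) =
      ∫ t in Set.Ioi (0 : ℝ),
        (x + 1 - (1 - Real.exp (-(x + 1) * t)) / (1 - Real.exp (-t))) *
          (Real.exp (-t) / t) := by
  rw [log_Gamma_eq_malF (by linarith : (0:ℝ) < x + 2), show x + 2 - 1 = x + 1 by ring]
  rfl
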